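/- arXiv:1407.8094 — 4 statements merged into one kernel-verified Lean document; each statement's English description precedes it below -/
import Mathlib

section
/- Let A be a nonempty bounded subset of ℝ^N, let δ > 0, and let γ be a real number with γ < N - dim_B̄(A), where dim_B̄(A) is the upper box (Minkowski) dimension of A. Then the integral ∫_{A_δ} d(x,A)^{-γ} dx is finite, where A_δ is the open δ-neighborhood of A and d(x,A) is the Euclidean distance from x to A. -/
open MeasureTheory Metric Filter Set Topology

/-- The upper `r`-dimensional Minkowski content of `A ⊆ ℝ^N`:
`limsup_{t→0+} |A_t| / t^(N-r)`. -/
noncomputable def upperMinkowskiContent (N : ℕ) (A : Set (EuclideanSpace ℝ (Fin N)))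
    (r : ℝ) : ENNReal :=
  Filter.limsup
    (fun t : ℝ => volume (Metric.thickening t A) / ENNReal.ofReal (t ^ ((N : ℝ) - r)))
    (nhdsWithin 0 (Set.Ioi 0))

/-- The upper box (Minkowski) dimension of `A ⊆ ℝ^N`. -/
noncomputable def upperBoxDim (N : ℕ) (A : Set (EuclideanSpace ℝ (Fin N))) : ℝ :=
  sInf {r : ℝ | upperMinkowskiContent N A r = 0}

/-!
For `γ ≤ 0` the integrand is bounded by `δ ^ (-γ)` on the bounded set `A_δ`. For `γ > 0`, pick
`r > dim_B̄ A` with `γ < N - r`; the `r`-dimensional content vanishes, so `|A_t| ≤ C t^(N-r)`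
for `0 < t ≤ δ`. Cut `A_δ` into the dyadic shells `δ 2^(-k-1) ≤ d(x,A) < δ 2^(-k)`: on the `k`-th
shell the integrand is at most `(δ 2^(-k-1))^(-γ)` and the shell lies in `A_{δ 2^(-k)}`, so its
contribution is `O(2^(-k(N-r-γ)))`, a convergent geometric series.
-/

section ThickeningIntegral

variable {X : Type*} [PseudoMetricSpace X]

lemma Metric.infDist_lt_of_mem_thickening {A : Set X} {x : X} {δ : ℝ}
    (hx : x ∈ thickening δ A) : infDist x A < δ := by
  obtain ⟨y, hy, hxy⟩ := mem_thickening_iff.1 hx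
  exact (infDist_le_dist_of_mem hy).trans_lt hxy

lemma exists_mul_pow_succ_le_lt_mul_pow {d T b : ℝ} (hd : 0 < d) (hdT : d < T)
    (hb₀ : 0 < b) (hb₁ : b < 1) : ∃ k : ℕ, T * b ^ (k + 1) ≤ d ∧ d < T * b ^ k := by
  have hT : 0 < T := hd.trans hdT
  have hex : ∃ k : ℕ, T * b ^ (k + 1) ≤ d := by
    obtain ⟨n, hn⟩ := exists_pow_lt_of_lt_one (div_pos hd hT) hb₁
    refine ⟨n, ?_⟩
    have hbn : b ^ (n + 1) ≤ b ^ n := pow_le_pow_of_le_one hb₀.le hb₁.le n.le_succ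
    rw [lt_div_iff₀ hT] at hn
    nlinarith
  refine ⟨Nat.find hex, Nat.find_spec hex, ?_⟩
  rcases h : Nat.find hex with _ | m
  · simpa using hdT
  · simpa using Nat.find_min hex (h ▸ m.lt_succ_self)

/-- Where `d(x,A) = 0` the left-hand side is the junk value `0 ^ (-γ) = 0`. -/
lemma ofReal_infDist_rpow_le_tsum_indicator_thickening (A : Set X) {γ T b : ℝ} (hγ : 0 < γ)
    (hb₀ : 0 < b) (hb₁ : b < 1) {x : X} (hx : infDist x A < T) :
    ENNReal.ofReal (infDist x A ^ (-γ)) ≤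
      ∑' k : ℕ, (thickening (T * b ^ k) A).indicator
        (fun _ => ENNReal.ofReal ((T * b ^ (k + 1)) ^ (-γ))) x := by
  rcases (infDist_nonneg (x := x) (s := A)).eq_or_lt with hd | hd
  · rw [← hd, Real.zero_rpow (neg_ne_zero.2 hγ.ne'), ENNReal.ofReal_zero]
    exact zero_le
  obtain ⟨k, hk_le, hk_lt⟩ := exists_mul_pow_succ_le_lt_mul_pow hd hx hb₀ hb₁
  have hA : A.Nonempty := nonempty_iff_ne_empty.2 fun h => by simp [h] at hd
  have hT : 0 < T := hd.trans hx
  refine le_trans ?_ (ENNReal.le_tsum k)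
  rw [indicator_of_mem ((mem_thickening_iff_infDist_lt hA).2 hk_lt)]
  exact ENNReal.ofReal_le_ofReal <|
    Real.rpow_le_rpow_of_nonpos (by positivity) hk_le (neg_nonpos.2 hγ.le)

variable [MeasurableSpace X]

lemma exists_measure_thickening_le_mul_rpow {μ : Measure X} {A : Set X} {a δ : ℝ} (ha : 0 ≤ a)
    (hδ : 0 < δ) (hμ : μ (thickening δ A) ≠ ⊤)
    (h : ∀ᶠ t in 𝓝[>] 0, μ (thickening t A) ≤ ENNReal.ofReal (t ^ a)) :
    ∃ C, ∀ t ∈ Ioc 0 δ, μ (thickening t A) ≤ ENNReal.ofReal (C * t ^ a) := by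
  obtain ⟨t₀, ht₀, hsub⟩ := mem_nhdsGT_iff_exists_Ioo_subset.1 h
  set s := min t₀ δ
  have hs : 0 < s := lt_min ht₀ hδ
  set C := max 1 ((μ (thickening δ A)).toReal / s ^ a)
  refine ⟨C, fun t ht => ?_⟩
  rcases lt_or_ge t s with hts | hst
  · calc μ (thickening t A) ≤ ENNReal.ofReal (t ^ a) := hsub ⟨ht.1, hts.trans_le (min_le_left _ _)⟩
      _ ≤ ENNReal.ofReal (C * t ^ a) := ENNReal.ofReal_le_ofReal <|
          le_mul_of_one_le_left (Real.rpow_nonneg ht.1.le _) (le_max_left _ _)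
  · calc μ (thickening t A) ≤ μ (thickening δ A) := measure_mono (thickening_mono ht.2 A)
      _ = ENNReal.ofReal ((μ (thickening δ A)).toReal / s ^ a * s ^ a) := by
          rw [div_mul_cancel₀ _ (Real.rpow_pos_of_pos hs a).ne', ENNReal.ofReal_toReal hμ]
      _ ≤ ENNReal.ofReal (C * t ^ a) := ENNReal.ofReal_le_ofReal <|
          mul_le_mul (le_max_right _ _) (Real.rpow_le_rpow hs.le hst ha)
            (Real.rpow_nonneg hs.le _) (zero_le_one.trans (le_max_left _ _))

variable [OpensMeasurableSpace X]

lemma setLIntegral_thickening_infDist_rpow_lt_top (μ : Measure X) {A : Set X} {γ a C T : ℝ}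
    (hγ : 0 < γ) (hγa : γ < a) (hT : 0 < T)
    (hμ : ∀ t ∈ Ioc 0 T, μ (thickening t A) ≤ ENNReal.ofReal (C * t ^ a)) :
    ∫⁻ x in thickening T A, ENNReal.ofReal (infDist x A ^ (-γ)) ∂μ < ⊤ := by
  set b : ℝ := 1 / 2
  have hb₀ : 0 < b := by norm_num
  have hb₁ : b < 1 := by norm_num
  set q : ℝ := b ^ (a - γ)
  have hq : q < 1 := Real.rpow_lt_one hb₀.le hb₁ (sub_pos.2 hγa)
  set K : ℝ := C * b ^ (-γ) * T ^ (a - γ)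
  have hterm : ∀ k : ℕ, ENNReal.ofReal ((T * b ^ (k + 1)) ^ (-γ)) * μ (thickening (T * b ^ k) A)
      ≤ ENNReal.ofReal K * ENNReal.ofReal q ^ k := by
    intro k
    have htk : 0 < T * b ^ k := by positivity
    have hshift : (T * b ^ (k + 1)) ^ (-γ) = (T * b ^ k) ^ (-γ) * b ^ (-γ) := by
      rw [pow_succ, ← mul_assoc, Real.mul_rpow htk.le hb₀.le]
    have hscale : (T * b ^ k) ^ (-γ) * (T * b ^ k) ^ a = T ^ (a - γ) * q ^ k := by
      rw [← Real.rpow_add htk, neg_add_eq_sub, Real.mul_rpow hT.le (by positivity),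
        ← Real.rpow_pow_comm hb₀.le]
    calc ENNReal.ofReal ((T * b ^ (k + 1)) ^ (-γ)) * μ (thickening (T * b ^ k) A)
        ≤ ENNReal.ofReal ((T * b ^ (k + 1)) ^ (-γ)) * ENNReal.ofReal (C * (T * b ^ k) ^ a) := by
          gcongr
          exact hμ _ ⟨htk, mul_le_of_le_one_right hT.le (pow_le_one₀ hb₀.le hb₁.le)⟩
      _ = ENNReal.ofReal ((T * b ^ (k + 1)) ^ (-γ) * (C * (T * b ^ k) ^ a)) :=
          (ENNReal.ofReal_mul (by positivity)).symm
      _ = ENNReal.ofReal (K * q ^ k) := by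
          congr 1
          rw [hshift]
          linear_combination (C * b ^ (-γ)) * hscale
      _ = ENNReal.ofReal K * ENNReal.ofReal q ^ k := by
          rw [ENNReal.ofReal_mul' (by positivity), ENNReal.ofReal_pow (by positivity)]
  calc ∫⁻ x in thickening T A, ENNReal.ofReal (infDist x A ^ (-γ)) ∂μ
      ≤ ∫⁻ x in thickening T A, ∑' k : ℕ, (thickening (T * b ^ k) A).indicator
          (fun _ => ENNReal.ofReal ((T * b ^ (k + 1)) ^ (-γ))) x ∂μ :=
        setLIntegral_mono' isOpen_thickening.measurableSet fun x hx =>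
          ofReal_infDist_rpow_le_tsum_indicator_thickening A hγ hb₀ hb₁
            (infDist_lt_of_mem_thickening hx)
    _ ≤ ∫⁻ x, ∑' k : ℕ, (thickening (T * b ^ k) A).indicator
          (fun _ => ENNReal.ofReal ((T * b ^ (k + 1)) ^ (-γ))) x ∂μ :=
        setLIntegral_le_lintegral _ _
    _ = ∑' k : ℕ, ENNReal.ofReal ((T * b ^ (k + 1)) ^ (-γ)) * μ (thickening (T * b ^ k) A) := by
        rw [lintegral_tsum fun k =>
          (measurable_const.indicator isOpen_thickening.measurableSet).aemeasurable]
        simp only [lintegral_indicator_const isOpen_thickening.measurableSet]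
    _ ≤ ∑' k : ℕ, ENNReal.ofReal K * ENNReal.ofReal q ^ k := ENNReal.tsum_le_tsum hterm
    _ = ENNReal.ofReal K * (1 - ENNReal.ofReal q)⁻¹ := by
        rw [ENNReal.tsum_mul_left, ENNReal.tsum_geometric]
    _ < ⊤ := ENNReal.mul_lt_top ENNReal.ofReal_lt_top
        (ENNReal.inv_lt_top.2 (tsub_pos_of_lt (ENNReal.ofReal_lt_one.2 hq)))

lemma setLIntegral_thickening_infDist_rpow_lt_top_of_nonpos (μ : Measure X) {A : Set X}
    {γ δ : ℝ} (hγ : γ ≤ 0) (hμ : μ (thickening δ A) ≠ ⊤) :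
    ∫⁻ x in thickening δ A, ENNReal.ofReal (infDist x A ^ (-γ)) ∂μ < ⊤ := by
  calc ∫⁻ x in thickening δ A, ENNReal.ofReal (infDist x A ^ (-γ)) ∂μ
      ≤ ∫⁻ _ in thickening δ A, ENNReal.ofReal (δ ^ (-γ)) ∂μ :=
        setLIntegral_mono' isOpen_thickening.measurableSet fun x hx =>
          ENNReal.ofReal_le_ofReal <| Real.rpow_le_rpow infDist_nonneg
            (infDist_lt_of_mem_thickening hx).le (neg_nonneg.2 hγ)
    _ = ENNReal.ofReal (δ ^ (-γ)) * μ (thickening δ A) := setLIntegral_const _ _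
    _ < ⊤ := ENNReal.mul_lt_top ENNReal.ofReal_lt_top hμ.lt_top

end ThickeningIntegral

section MinkowskiContent

variable {N : ℕ} {A : Set (EuclideanSpace ℝ (Fin N))}

lemma upperMinkowskiContent_eq_zero_of_lt (hA : Bornology.IsBounded A) {r : ℝ} (hr : N < r) :
    upperMinkowskiContent N A r = 0 := by
  have hV : volume (thickening 1 A) ≠ ⊤ := hA.thickening.measure_lt_top.ne
  have hpow : Tendsto (fun t : ℝ => t ^ (r - N)) (𝓝[>] 0) (𝓝 0) := by
    have := (Real.continuousAt_rpow_const 0 (r - N) (Or.inr (sub_pos.2 hr).le)).tendsto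
    rw [Real.zero_rpow (sub_pos.2 hr).ne'] at this
    exact this.mono_left nhdsWithin_le_nhds
  have hbound : Tendsto (fun t : ℝ => volume (thickening 1 A) * ENNReal.ofReal (t ^ (r - N)))
      (𝓝[>] 0) (𝓝 0) := by
    simpa using ENNReal.Tendsto.const_mul (ENNReal.tendsto_ofReal hpow) (Or.inr hV)
  refine (tendsto_of_tendsto_of_tendsto_of_le_of_le' tendsto_const_nhds hbound
    (Eventually.of_forall fun _ => zero_le) ?_).limsup_eq
  filter_upwards [Ioo_mem_nhdsGT zero_lt_one] with t ht
  rw [show (N : ℝ) - r = -(r - N) by ring, Real.rpow_neg ht.1.le,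
    ENNReal.ofReal_inv_of_pos (Real.rpow_pos_of_pos ht.1 _), div_eq_mul_inv, inv_inv]
  exact mul_le_mul_left (measure_mono (thickening_mono ht.2.le A)) _

lemma exists_upperMinkowskiContent_eq_zero_lt (hA : Bornology.IsBounded A) {s : ℝ}
    (hs : upperBoxDim N A < s) : ∃ r < s, upperMinkowskiContent N A r = 0 := by
  obtain ⟨r, hr, hrs⟩ := exists_lt_of_csInf_lt (s := {r | upperMinkowskiContent N A r = 0})
    ⟨N + 1, upperMinkowskiContent_eq_zero_of_lt hA (lt_add_one _)⟩ hs
  exact ⟨r, hrs, hr⟩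

lemma eventually_volume_thickening_le_of_upperMinkowskiContent_eq_zero {r : ℝ}
    (h : upperMinkowskiContent N A r = 0) :
    ∀ᶠ t in 𝓝[>] 0, volume (thickening t A) ≤ ENNReal.ofReal (t ^ ((N : ℝ) - r)) := by
  have hlt : limsup (fun t : ℝ => volume (thickening t A) / ENNReal.ofReal (t ^ ((N : ℝ) - r)))
      (𝓝[>] 0) < 1 := by
    rw [← upperMinkowskiContent, h]
    exact zero_lt_one
  filter_upwards [eventually_lt_of_limsup_lt hlt, self_mem_nhdsWithin] with t ht htpos
  have h0 : ENNReal.ofReal (t ^ ((N : ℝ) - r)) ≠ 0 := by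
    simpa using Real.rpow_pos_of_pos htpos _
  rw [ENNReal.div_lt_iff (Or.inl h0) (Or.inl ENNReal.ofReal_ne_top), one_mul] at ht
  exact ht.le

end MinkowskiContent

theorem stmt_0_general (N : ℕ) (A : Set (EuclideanSpace ℝ (Fin N)))
    (hAb : Bornology.IsBounded A) (δ : ℝ) (hδ : 0 < δ) (γ : ℝ)
    (hγ : γ < (N : ℝ) - upperBoxDim N A) :
    ∫⁻ x in Metric.thickening δ A, ENNReal.ofReal (Metric.infDist x A ^ (-γ)) < ⊤ := by
  have hfin : volume (thickening δ A) ≠ ⊤ := hAb.thickening.measure_lt_top.ne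
  rcases le_or_gt γ 0 with hγ₀ | hγ₀
  · exact setLIntegral_thickening_infDist_rpow_lt_top_of_nonpos volume hγ₀ hfin
  obtain ⟨r, hr, hcontent⟩ :=
    exists_upperMinkowskiContent_eq_zero_lt hAb (show upperBoxDim N A < N - γ by linarith)
  obtain ⟨C, hC⟩ := exists_measure_thickening_le_mul_rpow (by linarith) hδ hfin
    (eventually_volume_thickening_le_of_upperMinkowskiContent_eq_zero hcontent)
  exact setLIntegral_thickening_infDist_rpow_lt_top volume hγ₀ (by linarith) hδ hC

/-- Harvey–Polking: if `γ < N - dim_B̄ A`, then `∫_{A_δ} d(x,A)^{-γ} dx < ∞`. -/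
theorem stmt_0 (N : ℕ) (A : Set (EuclideanSpace ℝ (Fin N))) (hA : A.Nonempty)
    (hAb : Bornology.IsBounded A) (δ : ℝ) (hδ : 0 < δ) (γ : ℝ)
    (hγ : γ < (N : ℝ) - upperBoxDim N A) :
    ∫⁻ x in Metric.thickening δ A, ENNReal.ofReal (Metric.infDist x A ^ (-γ)) < ⊤ :=
  stmt_0_general N A hAb δ hδ γ hγ
end

section
/- Let A = {(0,0)} ⊆ ℝ² and Ω' = {(x,y) ∈ ℝ² : 0 < y < e^{-1/x}, 0 < x < 1}. Then dim_B̄(A, Ω') = −∞, i.e., for every r ∈ ℝ, limsup_{t→0+} |A_t ∩ Ω'| / t^{2-r} = 0. -/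
open MeasureTheory Metric Filter Set Topology

/-!
Inside the ball of radius `t` the region has `0 < x < t`, hence `0 < y < e^{-1/x} < e^{-1/t}`,
so its area is at most `t e^{-1/t}`. As `e^{-1/t}` decays faster than every power of `t` when
`t → 0+`, the ratio to `t^{2-r}` tends to `0` for every `r`.
-/

def underExpNegInv : Set (EuclideanSpace ℝ (Fin 2)) :=
  {p | 0 < p 0 ∧ p 0 < 1 ∧ 0 < p 1 ∧ p 1 < Real.exp (-1 / p 0)}

lemma exp_neg_one_div_le_of_le {x t : ℝ} (hx : 0 < x) (hxt : x ≤ t) :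
    Real.exp (-1 / x) ≤ Real.exp (-1 / t) := by
  rw [Real.exp_le_exp, neg_div, neg_div, neg_le_neg_iff]
  exact one_div_le_one_div_of_le hx hxt

lemma ball_zero_inter_underExpNegInv_subset (t : ℝ) :
    ball 0 t ∩ underExpNegInv ⊆
      WithLp.ofLp ⁻¹' univ.pi ![Ioo 0 t, Ioo 0 (Real.exp (-1 / t))] := by
  rintro p ⟨hp, hx0, -, hy0, hy⟩
  rw [mem_ball_zero_iff] at hp
  have hxt : p 0 < t := (le_abs_self _).trans_lt ((PiLp.norm_apply_le p 0).trans_lt hp)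
  intro i _
  fin_cases i
  · exact ⟨hx0, hxt⟩
  · exact ⟨hy0, hy.trans_le (exp_neg_one_div_le_of_le hx0 hxt.le)⟩

lemma volume_ball_zero_inter_underExpNegInv_le (t : ℝ) :
    volume (ball 0 t ∩ underExpNegInv) ≤ ENNReal.ofReal (t * Real.exp (-1 / t)) := by
  calc volume (ball 0 t ∩ underExpNegInv)
      ≤ volume (WithLp.ofLp ⁻¹' univ.pi ![Ioo 0 t, Ioo 0 (Real.exp (-1 / t))]) :=
        measure_mono (ball_zero_inter_underExpNegInv_subset t)
    _ = volume (univ.pi ![Ioo 0 t, Ioo 0 (Real.exp (-1 / t))]) :=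
        PiLp.volume_preserving_ofLp (Fin 2) |>.measure_preimage <|
          MeasurableSet.nullMeasurableSet <|
          .univ_pi fun i => by fin_cases i <;> exact measurableSet_Ioo
    _ = ENNReal.ofReal (t * Real.exp (-1 / t)) := by
        rw [volume_pi_pi, Fin.prod_univ_two]
        simp [Real.volume_Ioo, ENNReal.ofReal_mul', (Real.exp_pos _).le]

lemma tendsto_rpow_mul_exp_neg_one_div_nhdsGT_zero (s : ℝ) :
    Tendsto (fun t : ℝ => t ^ s * Real.exp (-1 / t)) (𝓝[>] 0) (𝓝 0) := by
  have h := (tendsto_rpow_mul_exp_neg_mul_atTop_nhds_zero (-s) 1 one_pos).comp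
    tendsto_inv_nhdsGT_zero
  refine h.congr' ?_
  filter_upwards [self_mem_nhdsWithin] with t (ht : 0 < t)
  rw [Function.comp_apply, Real.inv_rpow ht.le, ← Real.rpow_neg ht.le, neg_neg, neg_one_mul,
    neg_div, one_div]

lemma volume_ball_zero_inter_underExpNegInv_div_le {t : ℝ} (ht : 0 < t) (r : ℝ) :
    volume (ball 0 t ∩ underExpNegInv) / ENNReal.ofReal (t ^ (2 - r)) ≤
      ENNReal.ofReal (t ^ (r - 1) * Real.exp (-1 / t)) := by
  have hpow : t ^ (r - 1) = t / t ^ (2 - r) := by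
    rw [show r - 1 = 1 - (2 - r) by ring, Real.rpow_sub ht 1 (2 - r), Real.rpow_one]
  calc volume (ball 0 t ∩ underExpNegInv) / ENNReal.ofReal (t ^ (2 - r))
      ≤ ENNReal.ofReal (t * Real.exp (-1 / t)) / ENNReal.ofReal (t ^ (2 - r)) := by
        gcongr
        exact volume_ball_zero_inter_underExpNegInv_le t
    _ = ENNReal.ofReal (t ^ (r - 1) * Real.exp (-1 / t)) := by
        rw [← ENNReal.ofReal_div_of_pos (Real.rpow_pos_of_pos ht _), hpow]
        ring_nf

/-- For `A = {(0,0)}` and `Ω' = {(x,y) : 0 < y < e^{-1/x}, 0 < x < 1}`, the relative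
upper box dimension is `-∞`: for every `r ∈ ℝ`, `limsup_{t→0+} |A_t ∩ Ω'|/t^{2-r} = 0`. -/
theorem stmt_5 (A : Set (EuclideanSpace ℝ (Fin 2))) (hA : A = {0})
    (Ω' : Set (EuclideanSpace ℝ (Fin 2)))
    (hΩ' : Ω' = {p : EuclideanSpace ℝ (Fin 2) |
      0 < p 0 ∧ p 0 < 1 ∧ 0 < p 1 ∧ p 1 < Real.exp (-1 / p 0)}) :
    ∀ r : ℝ,
      Filter.limsup
        (fun t : ℝ =>
          volume (Metric.thickening t A ∩ Ω') / ENNReal.ofReal (t ^ ((2 : ℝ) - r)))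
        (nhdsWithin 0 (Set.Ioi 0)) = 0 := by
  subst hA hΩ'
  intro r
  have hbound := ENNReal.tendsto_ofReal (tendsto_rpow_mul_exp_neg_one_div_nhdsGT_zero (r - 1))
  rw [ENNReal.ofReal_zero] at hbound
  refine Tendsto.limsup_eq <| tendsto_of_tendsto_of_tendsto_of_le_of_le' tendsto_const_nhds hbound
    (.of_forall fun _ => zero_le) ?_
  filter_upwards [self_mem_nhdsWithin] with t (ht : 0 < t)
  rw [thickening_singleton]
  exact volume_ball_zero_inter_underExpNegInv_div_le ht r
end

section
/- Let β < 1 and let (c_j)_{j≥1} be a sequence of real numbers with c_j = O(j^β) as j → ∞ (and j + c_j > 0 for all j). Then the perturbed Riemann zeta function ζ_pert(s) := Σ_{j=1}^∞ (j + c_j)^{-s}, initially convergent for Re(s) > 1, admits a meromorphic continuation to the open half-plane {Re(s) > β}, whose only pole there is a simple pole at s = 1 with residue 1. -/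
/-!
Write `ζ_pert(s) = ζ(s) + ∑ⱼ ((j + cⱼ)^{-s} - j^{-s})`. Once `|cⱼ| ≤ j/2`, the mean value theorem
bounds the `j`-th difference by `O(|s| j^{β - Re s - 1})`, locally uniformly in `s`, so the
difference series is holomorphic on `Re s > β` by Weierstrass' theorem. Multiplying by `s - 1`,
what remains is `(s - 1) ζ(s)`, which extends to an entire function with value `1` at `s = 1`.
-/

open Filter Complex Topology

lemma rpow_le_two_rpow_abs {y : ℝ} (hy₁ : 1 / 2 ≤ y) (hy₂ : y ≤ 2) (t : ℝ) :
    y ^ t ≤ 2 ^ |t| := by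
  have hy : 0 < y := by linarith
  have hlog : |Real.log y| ≤ Real.log 2 := by
    have hlow := Real.log_le_log (by norm_num) hy₁
    rw [one_div, Real.log_inv] at hlow
    exact abs_le.mpr ⟨by linarith, Real.log_le_log hy hy₂⟩
  rw [Real.rpow_def_of_pos hy, Real.rpow_def_of_pos two_pos, Real.exp_le_exp]
  calc Real.log y * t ≤ |Real.log y * t| := le_abs_self _
    _ = |Real.log y| * |t| := abs_mul _ _
    _ ≤ Real.log 2 * |t| := by gcongr

lemma hasDerivAt_ofReal_cpow_neg {x : ℝ} (hx : 0 < x) (s : ℂ) :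
    HasDerivAt (fun y : ℝ => ((y : ℝ) : ℂ) ^ (-s)) (-s * ((x : ℝ) : ℂ) ^ (-s - 1)) x := by
  simpa using
    ((hasDerivAt_id (x : ℂ)).cpow_const (c := -s) (ofReal_mem_slitPlane.mpr hx)).comp_ofReal

lemma norm_ofReal_cpow_neg_sub_le {a b : ℝ} (hb : 0 < b) (hab : |a - b| ≤ b / 2) (s : ℂ) :
    ‖((a : ℝ) : ℂ) ^ (-s) - ((b : ℝ) : ℂ) ^ (-s)‖ ≤
      ‖s‖ * 2 ^ |s.re + 1| * b ^ (-s.re - 1) * |a - b| := by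
  obtain ⟨hab₁, hab₂⟩ := abs_le.mp hab
  have hderiv : ∀ x ∈ Set.Icc (b / 2) (2 * b), ‖-s * ((x : ℝ) : ℂ) ^ (-s - 1)‖ ≤
      ‖s‖ * 2 ^ |s.re + 1| * b ^ (-s.re - 1) := by
    rintro x ⟨hx₁, hx₂⟩
    have hx : 0 < x := by linarith
    have hratio : (x / b) ^ (-s.re - 1) ≤ 2 ^ |s.re + 1| := by
      rw [← abs_neg, neg_add']
      exact rpow_le_two_rpow_abs (by rw [le_div_iff₀ hb]; linarith)
        (by rw [div_le_iff₀ hb]; linarith) _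
    rw [norm_mul, norm_neg, norm_cpow_eq_rpow_re_of_pos hx, mul_assoc]
    gcongr
    calc x ^ (-s - 1).re = (x / b) ^ (-s.re - 1) * b ^ (-s.re - 1) := by
          rw [Real.div_rpow hx.le hb.le, div_mul_cancel₀ _ (by positivity)]; simp
      _ ≤ 2 ^ |s.re + 1| * b ^ (-s.re - 1) := by gcongr
  have := (convex_Icc (b / 2) (2 * b)).norm_image_sub_le_of_norm_hasDerivWithin_le
    (fun x hx => (hasDerivAt_ofReal_cpow_neg (by linarith [hx.1]) s).hasDerivWithinAt) hderiv
    (x := b) (y := a) ⟨by linarith, by linarith⟩ ⟨by linarith, by linarith⟩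
  simpa [← ofReal_sub, norm_real] using this

lemma norm_ofReal_cpow_neg_sub_le_rpow {a b C β σ M : ℝ} {s : ℂ} (hb : 1 ≤ b)
    (hab : |a - b| ≤ b / 2) (habC : |a - b| ≤ C * b ^ β) (hσ : σ ≤ s.re) (hM : ‖s‖ ≤ M) :
    ‖((a : ℝ) : ℂ) ^ (-s) - ((b : ℝ) : ℂ) ^ (-s)‖ ≤ M * 2 ^ (M + 1) * C * b ^ (β - σ - 1) := by
  have hb₀ : 0 < b := by linarith
  have hexp : |s.re + 1| ≤ M + 1 :=
    (abs_add_le _ _).trans (by rw [abs_one]; linarith [abs_re_le_norm s])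
  calc ‖((a : ℝ) : ℂ) ^ (-s) - ((b : ℝ) : ℂ) ^ (-s)‖
      ≤ ‖s‖ * 2 ^ |s.re + 1| * b ^ (-s.re - 1) * |a - b| := norm_ofReal_cpow_neg_sub_le hb₀ hab s
    _ ≤ M * 2 ^ (M + 1) * b ^ (-σ - 1) * (C * b ^ β) := by
      have htwo : (2 : ℝ) ^ |s.re + 1| ≤ 2 ^ (M + 1) :=
        Real.rpow_le_rpow_of_exponent_le one_le_two hexp
      have hpow : b ^ (-s.re - 1) ≤ b ^ (-σ - 1) :=
        Real.rpow_le_rpow_of_exponent_le hb (by linarith)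
      have hM₀ : 0 ≤ M := (norm_nonneg s).trans hM
      gcongr
    _ = M * 2 ^ (M + 1) * C * b ^ (β - σ - 1) := by
      rw [show β - σ - 1 = -σ - 1 + β by ring, Real.rpow_add hb₀]
      ring

lemma eventually_mul_rpow_le_half {β : ℝ} (hβ : β < 1) (C : ℝ) :
    ∀ᶠ x : ℝ in atTop, C * x ^ β ≤ x / 2 := by
  have hdecay : Tendsto (fun x : ℝ => C * x ^ (β - 1)) atTop (𝓝 0) := by
    simpa using (tendsto_rpow_neg_atTop (sub_pos.mpr hβ)).const_mul C
  filter_upwards [hdecay.eventually_le_const (by norm_num : (0 : ℝ) < 1 / 2), eventually_gt_atTop 0]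
    with x hsmall hx
  calc C * x ^ β = C * x ^ (β - 1) * x := by
        rw [mul_assoc, ← Real.rpow_add_one hx.ne', sub_add_cancel]
    _ ≤ 1 / 2 * x := by gcongr
    _ = x / 2 := by ring

lemma differentiableOn_tsum_of_eventually_norm_le {F : ℕ → ℂ → ℂ} {U : Set ℂ} {u : ℕ → ℝ}
    (hu : Summable u) (hF : ∀ i, DifferentiableOn ℂ (F i) U) (hU : IsOpen U)
    (hle : ∀ᶠ i in atTop, ∀ w ∈ U, ‖F i w‖ ≤ u i) :
    DifferentiableOn ℂ (fun w => ∑' i, F i w) U := by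
  obtain ⟨N, hN⟩ := eventually_atTop.mp hle
  have htail : DifferentiableOn ℂ (fun w => ∑' i, F (i + N) w) U :=
    differentiableOn_tsum_of_summable_norm ((summable_nat_add_iff N).mpr hu) (fun i => hF _) hU
      fun i => hN (i + N) (Nat.le_add_left N i)
  refine ((DifferentiableOn.fun_sum (u := Finset.range N) fun i _ => hF i).add htail).congr
    fun w hw => ?_
  exact ((Summable.of_norm_bounded_eventually_nat hu
    (hle.mono fun i hi => hi w hw)).sum_add_tsum_nat_add N).symm

/-- Index `j` stands for the paper's `j + 1`, matching `riemannZeta s = ∑' j, (j + 1)^{-s}`. -/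
noncomputable def zetaDiffTerm (a : ℕ → ℝ) (j : ℕ) (s : ℂ) : ℂ :=
  ((a j : ℝ) : ℂ) ^ (-s) - (((j : ℝ) + 1 : ℝ) : ℂ) ^ (-s)

lemma summable_nat_add_one_rpow {p : ℝ} (hp : p < -1) :
    Summable fun n : ℕ => ((n : ℝ) + 1) ^ p := by
  simpa using (summable_nat_add_iff 1).mpr (Real.summable_nat_rpow.mpr hp)

section

variable {a : ℕ → ℝ} {β C : ℝ}

lemma exists_nhds_eventually_norm_zetaDiffTerm_le (hβ : β < 1)
    (hC : ∀ j : ℕ, |a j - ((j : ℝ) + 1)| ≤ C * ((j : ℝ) + 1) ^ β) {s₀ : ℂ} (hs₀ : β < s₀.re) :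
    ∃ U : Set ℂ, IsOpen U ∧ s₀ ∈ U ∧ ∃ u : ℕ → ℝ, Summable u ∧
      ∀ᶠ j in atTop, ∀ s ∈ U, ‖zetaDiffTerm a j s‖ ≤ u j := by
  set σ := (β + s₀.re) / 2
  set M := ‖s₀‖ + 1
  have hcut : ∀ᶠ j : ℕ in atTop, C * ((j : ℝ) + 1) ^ β ≤ ((j : ℝ) + 1) / 2 :=
    (tendsto_atTop_add_const_right _ 1 tendsto_natCast_atTop_atTop).eventually
      (eventually_mul_rpow_le_half hβ C)
  refine ⟨{s | σ < s.re} ∩ Metric.ball 0 M,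
    (isOpen_lt continuous_const continuous_re).inter Metric.isOpen_ball,
    ⟨by simp only [Set.mem_ofPred_eq, σ]; linarith, by simp [M]⟩,
    fun j => M * 2 ^ (M + 1) * C * ((j : ℝ) + 1) ^ (β - σ - 1),
    (summable_nat_add_one_rpow (by simp only [σ]; linarith)).mul_left _, ?_⟩
  filter_upwards [hcut] with j hj s ⟨hσs, hsM⟩
  exact norm_ofReal_cpow_neg_sub_le_rpow (by linarith [j.cast_nonneg (α := ℝ)]) ((hC j).trans hj)
    (hC j) hσs.le (mem_ball_zero_iff.mp hsM).le

lemma summable_zetaDiffTerm (hβ : β < 1)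
    (hC : ∀ j : ℕ, |a j - ((j : ℝ) + 1)| ≤ C * ((j : ℝ) + 1) ^ β) {s : ℂ} (hs : β < s.re) :
    Summable fun j => zetaDiffTerm a j s := by
  obtain ⟨U, -, hsU, u, hu, hle⟩ := exists_nhds_eventually_norm_zetaDiffTerm_le hβ hC hs
  exact hu.of_norm_bounded_eventually_nat (hle.mono fun j hj => hj s hsU)

lemma differentiable_zetaDiffTerm (ha : ∀ j, a j ≠ 0) (j : ℕ) :
    Differentiable ℂ (zetaDiffTerm a j) :=
  (differentiable_neg.const_cpow (Or.inl (ofReal_ne_zero.mpr (ha j)))).sub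
    (differentiable_neg.const_cpow (Or.inl (ofReal_ne_zero.mpr (by positivity))))

lemma differentiableOn_tsum_zetaDiffTerm (hβ : β < 1)
    (hC : ∀ j : ℕ, |a j - ((j : ℝ) + 1)| ≤ C * ((j : ℝ) + 1) ^ β) (ha : ∀ j, a j ≠ 0) :
    DifferentiableOn ℂ (fun s => ∑' j, zetaDiffTerm a j s) {s | β < s.re} := by
  refine differentiableOn_of_locally_differentiableOn fun s₀ hs₀ => ?_
  obtain ⟨U, hU, hs₀U, u, hu, hle⟩ := exists_nhds_eventually_norm_zetaDiffTerm_le hβ hC hs₀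
  exact ⟨U, hU, hs₀U, (differentiableOn_tsum_of_eventually_norm_le hu
    (fun j => (differentiable_zetaDiffTerm ha j).differentiableOn) hU hle).mono
    Set.inter_subset_right⟩

end

lemma hasSum_ofReal_add_one_cpow_neg_riemannZeta {s : ℂ} (hs : 1 < s.re) :
    HasSum (fun j : ℕ => (((j : ℝ) + 1 : ℝ) : ℂ) ^ (-s)) (riemannZeta s) := by
  have hsum : Summable fun j : ℕ => 1 / ((j : ℂ) + 1) ^ s := by
    simpa using (summable_nat_add_iff 1).mpr (summable_one_div_nat_cpow.mpr hs)
  convert hsum.hasSum using 1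
  · funext j
    rw [cpow_neg, one_div]
    push_cast
    rfl
  · exact zeta_eq_tsum_one_div_nat_add_one_cpow hs

lemma differentiable_update_sub_one_mul_riemannZeta :
    Differentiable ℂ (Function.update (fun s => (s - 1) * riemannZeta s) 1 1) := by
  rw [← differentiableOn_univ, ← differentiableOn_compl_singleton_and_continuousAt_iff univ_mem]
  refine ⟨fun s hs => ?_, continuousAt_update_same.mpr riemannZeta_residue_one⟩
  have hs : s ≠ 1 := hs.2
  have hprod := (differentiableAt_id.sub_const 1).mul (differentiableAt_riemannZeta hs)
  refine (hprod.congr_of_eventuallyEq ?_).differentiableWithinAt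
  filter_upwards [isOpen_compl_singleton.mem_nhds hs] with t ht
  exact Function.update_of_ne ht _ _

/-- The continuation is encoded by `F s = (s - 1) ζ_pert(s)`, holomorphic on `Re s > β`;
`F 1 = 1` is the residue at the simple pole. -/
theorem stmt_13 (β : ℝ) (hβ : β < 1) (c : ℕ → ℝ)
    (hO : ∃ C : ℝ, 0 < C ∧ ∀ j : ℕ, |c (j + 1)| ≤ C * ((j : ℝ) + 1) ^ β)
    (hpos : ∀ j : ℕ, 0 < ((j : ℝ) + 1) + c (j + 1)) :
    ∃ F : ℂ → ℂ,
      DifferentiableOn ℂ F {s : ℂ | β < s.re} ∧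
      (∀ s : ℂ, 1 < s.re →
        F s = (s - 1) * ∑' j : ℕ, ((((j : ℝ) + 1) + c (j + 1) : ℝ) : ℂ) ^ (-s)) ∧
      F 1 = 1 := by
  obtain ⟨C, -, hC⟩ := hO
  set a : ℕ → ℝ := fun j => ((j : ℝ) + 1) + c (j + 1)
  have haC : ∀ j : ℕ, |a j - ((j : ℝ) + 1)| ≤ C * ((j : ℝ) + 1) ^ β := fun j => by
    simpa [a] using hC j
  refine ⟨fun s => Function.update (fun s => (s - 1) * riemannZeta s) 1 1 s +
      (s - 1) * ∑' j, zetaDiffTerm a j s, ?_, fun s hs => ?_, by simp⟩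
  · exact differentiable_update_sub_one_mul_riemannZeta.differentiableOn.add
      ((differentiableOn_id.sub_const 1).mul
        (differentiableOn_tsum_zetaDiffTerm hβ haC fun j => (hpos j).ne'))
  · have hs₁ : s ≠ 1 := by rintro rfl; simp at hs
    have hsplit := (summable_zetaDiffTerm hβ haC (hβ.trans hs)).hasSum.add
      (hasSum_ofReal_add_one_cpow_neg_riemannZeta hs)
    simp only [zetaDiffTerm, sub_add_cancel] at hsplit
    have htsum : ∑' j : ℕ, ((((j : ℝ) + 1) + c (j + 1) : ℝ) : ℂ) ^ (-s) =
        ∑' j, zetaDiffTerm a j s + riemannZeta s := hsplit.tsum_eq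
    dsimp only
    rw [htsum, Function.update_of_ne hs₁]
    ring
end

section
/- Let (A₀, Ω₀) be a relative fractal drum with Dirichlet eigenvalues (μ_k^{(0)})_{k≥1} and spectral zeta function ζ*₀(s) = Σ_k (μ_k^{(0)})^{-s/2} (abscissa of convergence D₀), and let L = (λ_j)_{j≥1} be a fractal string with geometric zeta function ζ_L(s) = Σ_j λ_j^s (abscissa of convergence D_L). If the relative fractal spray (A, Ω) is the disjoint union of scaled isometric copies λ_j(A₀,Ω₀), then its spectral zeta function satisfies ζ*_{(A,Ω)}(s) = ζ*₀(s) · ζ_L(s) for Re(s) > max(D₀, D_L), and D(ζ*_{(A,Ω)}) = max(D₀, D_L). -/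
open Filter Complex

/-!
The eigenvalues of the spray are `λ_j⁻² μ_k`, so each term of its zeta series factors as
`λ_j ^ s · μ_k ^ (-s/2)`. A double series of positive products converges iff both factor series
do, so the set of real exponents where the spray's series converges is the intersection of the
corresponding sets for `ζ_L` and `ζ*₀`. Since the terms are eventually `≤ 1`, these sets are
upward closed, hence nested, and the infimum of their intersection is the maximum of the
infima. For `Re s` beyond both abscissae all three series converge absolutely and the double
sum splits as a product.
-/

section RpowSummability

variable {ι : Type*} {f : ι → ℝ}

theorem summable_rpow_of_le (hpos : ∀ i, 0 < f i) (hle : ∀ᶠ i in cofinite, f i ≤ 1)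
    {a b : ℝ} (hab : a ≤ b) (h : Summable fun i => f i ^ a) : Summable fun i => f i ^ b :=
  h.of_norm_bounded_eventually <| hle.mono fun i hi => by
    rw [Real.norm_of_nonneg (Real.rpow_nonneg (hpos i).le _)]
    exact Real.rpow_le_rpow_of_exponent_ge (hpos i) hi hab

theorem isUpperSet_setOf_summable_rpow (hpos : ∀ i, 0 < f i)
    (hle : ∀ᶠ i in cofinite, f i ≤ 1) : IsUpperSet {σ : ℝ | Summable fun i => f i ^ σ} :=
  fun _ _ hab h => summable_rpow_of_le hpos hle hab h

theorem nonneg_of_summable_rpow [Infinite ι] (hpos : ∀ i, 0 < f i)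
    (hle : ∀ᶠ i in cofinite, f i ≤ 1) {σ : ℝ} (h : Summable fun i => f i ^ σ) :
    0 ≤ σ := by
  by_contra! hσ
  obtain ⟨i, hsmall, hi⟩ :=
    ((h.tendsto_cofinite_zero.eventually_lt_const one_pos).and hle).exists
  exact hsmall.not_ge (Real.one_le_rpow_of_pos_of_le_one_of_nonpos (hpos i) hi hσ.le)

theorem bddBelow_setOf_summable_rpow [Infinite ι] (hpos : ∀ i, 0 < f i)
    (hle : ∀ᶠ i in cofinite, f i ≤ 1) : BddBelow {σ : ℝ | Summable fun i => f i ^ σ} :=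
  ⟨0, fun _ => nonneg_of_summable_rpow hpos hle⟩

end RpowSummability

section ProductSummability

variable {ι κ : Type*} [Nonempty ι] [Nonempty κ] {f : ι → ℝ} {g : κ → ℝ}

theorem summable_mul_prod_iff_of_pos (hf : ∀ i, 0 < f i) (hg : ∀ j, 0 < g j) :
    Summable (fun p : ι × κ => f p.1 * g p.2) ↔ Summable f ∧ Summable g := by
  refine ⟨fun h => ⟨?_, ?_⟩, fun ⟨hfs, hgs⟩ =>
    hfs.mul_of_nonneg hgs (fun i => (hf i).le) (fun j => (hg j).le)⟩
  · obtain ⟨j⟩ := ‹Nonempty κ›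
    exact (summable_mul_right_iff (hg j).ne').1 (h.comp_injective (Prod.mk_left_injective j))
  · obtain ⟨i⟩ := ‹Nonempty ι›
    exact (summable_mul_left_iff (hf i).ne').1 (h.comp_injective (Prod.mk_right_injective i))

theorem setOf_summable_rpow_mul_prod (hf : ∀ i, 0 < f i) (hg : ∀ j, 0 < g j) :
    {σ : ℝ | Summable fun p : ι × κ => (f p.1 * g p.2) ^ σ} =
      {σ | Summable fun i => f i ^ σ} ∩ {σ | Summable fun j => g j ^ σ} := by
  ext σ
  simp only [Set.mem_ofPred_eq, Set.mem_inter_iff, Real.mul_rpow (hf _).le (hg _).le]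
  exact summable_mul_prod_iff_of_pos (fun i => Real.rpow_pos_of_pos (hf i) σ)
    (fun j => Real.rpow_pos_of_pos (hg j) σ)

end ProductSummability

section UpperSet

variable {α : Type*} [ConditionallyCompleteLinearOrder α] {s t : Set α}

theorem IsUpperSet.mem_of_csInf_lt (hs : IsUpperSet s) (hne : s.Nonempty) {a : α}
    (h : sInf s < a) : a ∈ s :=
  let ⟨_, hb, hlt⟩ := exists_lt_of_csInf_lt hne h
  hs hlt.le hb

theorem IsUpperSet.csInf_inter (hs : IsUpperSet s) (ht : IsUpperSet t) (hsne : s.Nonempty)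
    (htne : t.Nonempty) (hsb : BddBelow s) (htb : BddBelow t) :
    sInf (s ∩ t) = max (sInf s) (sInf t) := by
  rcases hs.total ht with hst | hts
  · rw [Set.inter_eq_left.2 hst, max_eq_left (csInf_le_csInf htb hsne hst)]
  · rw [Set.inter_eq_right.2 hts, max_eq_right (csInf_le_csInf hsb htne hts)]

end UpperSet

theorem summable_norm_ofReal_cpow {ι : Type*} {f : ι → ℝ} (hf : ∀ i, 0 < f i) {s : ℂ}
    (h : Summable fun i => f i ^ s.re) : Summable fun i => ‖(f i : ℂ) ^ s‖ :=
  h.congr fun i => (norm_cpow_eq_rpow_re_of_pos (hf i) s).symm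

theorem Real.rpow_neg_div_two_eq_inv_sqrt_rpow {x : ℝ} (hx : 0 ≤ x) (σ : ℝ) :
    x ^ (-σ / 2) = (√x)⁻¹ ^ σ := by
  rw [Real.sqrt_eq_rpow, ← Real.rpow_neg hx, ← Real.rpow_mul hx]
  ring_nf

theorem Real.rpow_neg_two_mul_rpow_neg_div_two {x y : ℝ} (hx : 0 < x) (hy : 0 ≤ y) (σ : ℝ) :
    (x ^ (-(2 : ℝ)) * y) ^ (-σ / 2) = (x * (√y)⁻¹) ^ σ := by
  rw [Real.mul_rpow (Real.rpow_nonneg hx.le _) hy, ← Real.rpow_mul hx.le,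
    Real.mul_rpow hx.le (inv_nonneg.2 (Real.sqrt_nonneg y)),
    Real.rpow_neg_div_two_eq_inv_sqrt_rpow hy, show -2 * (-σ / 2) = σ by ring]

theorem Complex.ofReal_rpow_neg_two_mul_cpow_neg_div_two {x y : ℝ} (hx : 0 < x)
    (hy : 0 ≤ y) (s : ℂ) :
    ((x ^ (-(2 : ℝ)) * y : ℝ) : ℂ) ^ (-s / 2) = (x : ℂ) ^ s * (y : ℂ) ^ (-s / 2) := by
  rw [ofReal_mul, mul_cpow_ofReal_nonneg (Real.rpow_nonneg hx.le _) hy,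
    ← cpow_mul_ofReal_nonneg hx.le]
  congr 2
  push_cast
  ring

theorem stmt_17_general (μ : ℕ → ℝ) (hμpos : ∀ k, 0 < μ k)
    (hμtop : Filter.Tendsto μ Filter.atTop Filter.atTop)
    (lam : ℕ → ℝ) (hlpos : ∀ j, 0 < lam j)
    (hlsum : Summable lam)
    (D₀ : ℝ) (hD₀ : D₀ = sInf {σ : ℝ | Summable fun k : ℕ => μ k ^ (-σ / 2)})
    (hD₀fin : ∃ σ : ℝ, Summable fun k : ℕ => μ k ^ (-σ / 2))
    (DL : ℝ) (hDL : DL = sInf {σ : ℝ | Summable fun j : ℕ => lam j ^ σ}) :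
    (∀ s : ℂ, max D₀ DL < s.re →
      ∑' p : ℕ × ℕ, (((lam p.1 ^ (-(2 : ℝ)) * μ p.2 : ℝ)) : ℂ) ^ (-s / 2)
        = (∑' k : ℕ, ((μ k : ℝ) : ℂ) ^ (-s / 2)) * ∑' j : ℕ, ((lam j : ℝ) : ℂ) ^ s) ∧
    sInf {σ : ℝ | Summable fun p : ℕ × ℕ => (lam p.1 ^ (-(2 : ℝ)) * μ p.2) ^ (-σ / 2)}
      = max D₀ DL := by
  -- `μ k ^ (-σ / 2) = ν k ^ σ` puts all three series in the form `∑ f i ^ σ`.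
  set ν : ℕ → ℝ := fun k => (√(μ k))⁻¹
  have hνpos : ∀ k, 0 < ν k := fun k => inv_pos.2 (Real.sqrt_pos.2 (hμpos k))
  have hνle : ∀ᶠ k in cofinite, ν k ≤ 1 := by
    rw [Nat.cofinite_eq_atTop]
    exact (hμtop.eventually_ge_atTop 1).mono fun k hk =>
      inv_le_one_of_one_le₀ (Real.one_le_sqrt.2 hk)
  have hlle : ∀ᶠ j in cofinite, lam j ≤ 1 :=
    hlsum.tendsto_cofinite_zero.eventually_le_const one_pos
  have hμν (σ : ℝ) (k : ℕ) : μ k ^ (-σ / 2) = ν k ^ σ :=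
    Real.rpow_neg_div_two_eq_inv_sqrt_rpow (hμpos k).le σ
  have hterm (σ : ℝ) (p : ℕ × ℕ) :
      (lam p.1 ^ (-(2 : ℝ)) * μ p.2) ^ (-σ / 2) = (lam p.1 * ν p.2) ^ σ :=
    Real.rpow_neg_two_mul_rpow_neg_div_two (hlpos p.1) (hμpos p.2).le σ
  simp_rw [hμν] at hD₀ hD₀fin
  simp_rw [hterm, setOf_summable_rpow_mul_prod hlpos hνpos]
  have hL := isUpperSet_setOf_summable_rpow hlpos hlle
  have hLne : {σ : ℝ | Summable fun j => lam j ^ σ}.Nonempty := ⟨1, by simpa using hlsum⟩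
  have hν := isUpperSet_setOf_summable_rpow hνpos hνle
  refine ⟨fun s hs => ?_, ?_⟩
  · have hLs : Summable fun j => ‖(lam j : ℂ) ^ s‖ := summable_norm_ofReal_cpow hlpos <|
      hL.mem_of_csInf_lt hLne (hDL ▸ (le_max_right _ _).trans_lt hs)
    have hμs : Summable fun k => ‖(μ k : ℂ) ^ (-s / 2)‖ := by
      refine summable_norm_ofReal_cpow hμpos ?_
      rw [show (-s / 2).re = -s.re / 2 by simp]
      simp_rw [hμν]
      exact hν.mem_of_csInf_lt hD₀fin (hD₀ ▸ (le_max_left _ _).trans_lt hs)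
    rw [mul_comm, tsum_mul_tsum_of_summable_norm hLs hμs]
    exact tsum_congr fun p =>
      ofReal_rpow_neg_two_mul_cpow_neg_div_two (hlpos p.1) (hμpos p.2).le s
  · rw [hL.csInf_inter hν hLne hD₀fin (bddBelow_setOf_summable_rpow hlpos hlle)
      (bddBelow_setOf_summable_rpow hνpos hνle), hD₀, hDL, max_comm]

/-- Spectral zeta function of a relative fractal spray: if `(A,Ω)` is the disjoint union
of scaled copies `λ_j (A₀, Ω₀)` of a base drum with Dirichlet eigenvalues `(μ_k)`, then
its eigenvalues are `λ_j^{-2} μ_k`, and `ζ*_{(A,Ω)}(s) = ζ*₀(s) · ζ_L(s)` for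
`Re s > max(D₀, D_L)`; moreover `D(ζ*_{(A,Ω)}) = max(D₀, D_L)`. -/
theorem stmt_17 (μ : ℕ → ℝ) (hμpos : ∀ k, 0 < μ k) (hμmono : Monotone μ)
    (hμtop : Filter.Tendsto μ Filter.atTop Filter.atTop)
    (lam : ℕ → ℝ) (hlpos : ∀ j, 0 < lam j) (hlmono : Antitone lam)
    (hlsum : Summable lam)
    (D₀ : ℝ) (hD₀ : D₀ = sInf {σ : ℝ | Summable fun k : ℕ => μ k ^ (-σ / 2)})
    (hD₀fin : ∃ σ : ℝ, Summable fun k : ℕ => μ k ^ (-σ / 2))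
    (DL : ℝ) (hDL : DL = sInf {σ : ℝ | Summable fun j : ℕ => lam j ^ σ}) :
    (∀ s : ℂ, max D₀ DL < s.re →
      ∑' p : ℕ × ℕ, (((lam p.1 ^ (-(2 : ℝ)) * μ p.2 : ℝ)) : ℂ) ^ (-s / 2)
        = (∑' k : ℕ, ((μ k : ℝ) : ℂ) ^ (-s / 2)) * ∑' j : ℕ, ((lam j : ℝ) : ℂ) ^ s) ∧
    sInf {σ : ℝ | Summable fun p : ℕ × ℕ => (lam p.1 ^ (-(2 : ℝ)) * μ p.2) ^ (-σ / 2)}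
      = max D₀ DL :=
  stmt_17_general μ hμpos hμtop lam hlpos hlsum D₀ hD₀ hD₀fin DL hDL
end
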